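/- Let X be a Banach space, let C be a nonempty bounded, norm-closed, convex subset of X with 0 ∈ C, and let (u_n) be a sequence in C that is equivalent to the unit vector basis of ℓ₁, i.e. there exist constants 0 < a ≤ b such that a·∑_{i}|t_i| ≤ ‖∑_{i} t_i u_i‖ ≤ b·∑_{i}|t_i| for every finitely supported sequence of scalars (t_i). Then there exists a Hausdorff locally convex vector topology τ on X weaker than the weak topology such that K := K_σ^+({u_n}) is a τ-compact convex subset of C, and the affine map T : K → K defined by T(∑_{i=1}^∞ t_i u_i) := (1 − ∑_{i=1}^∞ t_i)·u_1 + ∑_{i=1}^∞ t_i u_{i+1} is bi-Lipschitz and has no fixed point in K. -/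

import Mathlib

open Filter Topology

noncomputable section

/-- The weak topology σ(X, X*) on a normed space `X`. -/
def weakTopology (X : Type*) [NormedAddCommGroup X] [NormedSpace ℝ X] : TopologicalSpace X :=
  TopologicalSpace.induced (fun x => fun f : X →L[ℝ] ℝ => f x) Pi.topologicalSpace

/-- A map is affine on a convex set `K`. -/
def AffineOn {X : Type*} [NormedAddCommGroup X] [NormedSpace ℝ X] (T : X → X) (K : Set X) : Prop :=
  ∀ x ∈ K, ∀ y ∈ K, ∀ s : ℝ, 0 ≤ s → s ≤ 1 →
    T (s • x + (1 - s) • y) = s • T x + (1 - s) • T y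

/-- A map is bi-Lipschitz on a set `K`. -/
def BiLipschitzOn {X : Type*} [NormedAddCommGroup X] [NormedSpace ℝ X]
    (T : X → X) (K : Set X) : Prop :=
  ∃ c L : ℝ, 0 < c ∧ c ≤ L ∧ ∀ x ∈ K, ∀ y ∈ K,
    c * ‖x - y‖ ≤ ‖T x - T y‖ ∧ ‖T x - T y‖ ≤ L * ‖x - y‖

/-- The σ-convex conical hull `K_σ^+({u_n})` of a sequence. -/
def KplusSigma {X : Type*} [NormedAddCommGroup X] [NormedSpace ℝ X] (u : ℕ → X) : Set X :=
  {v | ∃ t : ℕ → ℝ, (∀ i, 0 ≤ t i) ∧ (∀ i, t i ≤ 1) ∧ Summable t ∧ (∑' i, t i) ≤ 1 ∧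
    HasSum (fun i => t i • u i) v}

/-- A valid coefficient sequence for `K_σ^+`. -/
def ValidCoeff (t : ℕ → ℝ) : Prop :=
  (∀ i, 0 ≤ t i) ∧ (∀ i, t i ≤ 1) ∧ Summable t ∧ (∑' i, t i) ≤ 1

/-!
The synthesis map `t ↦ ∑ tᵢ uᵢ` embeds `ℓ¹` isomorphically into `X`, so the coordinate
functionals of `(uₙ)` are bounded on its closed range and extend to `X` by Hahn–Banach. Together
with the functionals vanishing on a tail of `(uₙ)` they separate points, and `τ` is the weak
topology they generate. Each of them evaluates `∑ tᵢ uᵢ` through finitely many coordinates of `t`,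
so `K_σ^+` is a continuous image of the compact coefficient set `{t ≥ 0, ∑ t ≤ 1} ⊆ [0,1]^ℕ`.
On coefficients `T` is the shift `t ↦ (1 - ∑ t, t₀, t₁, …)`, which changes `ℓ¹` distances by a
factor between `1` and `2`; a fixed point would be a constant summable, hence zero, sequence,
whose shift starts with `1`.
-/

theorem ContinuousLinearMap.exists_comp_eq_of_antilipschitz {𝕜 E F : Type*} [RCLike 𝕜]
    [NormedAddCommGroup E] [NormedSpace 𝕜 E] [CompleteSpace E]
    [NormedAddCommGroup F] [NormedSpace 𝕜 F] [CompleteSpace F] (f : E →L[𝕜] F) {K : NNReal}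
    (hf : AntilipschitzWith K f) (g : StrongDual 𝕜 E) : ∃ h : StrongDual 𝕜 F, h.comp f = g := by
  let e := f.equivRange hf.injective (hf.isClosed_range f.uniformContinuous)
  obtain ⟨h, hh, -⟩ := exists_extension_norm_eq _ (g.comp e.symm.toContinuousLinearMap)
  refine ⟨h, ContinuousLinearMap.ext fun x => ?_⟩
  simpa [e] using hh ⟨f x, by simp⟩

theorem Submodule.exists_strongDual_ne_zero_of_notMem {𝕜 E : Type*} [RCLike 𝕜]
    [NormedAddCommGroup E] [NormedSpace 𝕜 E] {Y : Submodule 𝕜 E} (hY : IsClosed (Y : Set E))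
    {x : E} (hx : x ∉ Y) : ∃ f : StrongDual 𝕜 E, f x ≠ 0 ∧ ∀ y ∈ Y, f y = 0 := by
  have hne : Y.mkQL x ≠ 0 := by simpa [Submodule.mkQL_apply] using hx
  obtain ⟨f, hf⟩ := SeparatingDual.exists_ne_zero (R := 𝕜) hne
  exact ⟨f.comp Y.mkQL, hf, fun y hy => by
    rw [ContinuousLinearMap.comp_apply, Submodule.mkQL_apply, Submodule.mkQ_apply,
      (Submodule.Quotient.mk_eq_zero Y).2 hy, map_zero]⟩

theorem HasSum.tsum_eq_of_le_topology {α ι : Type*} [AddCommMonoid α]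
    {σ τ : TopologicalSpace α} (hστ : σ ≤ τ) [@T2Space α τ] {f : ι → α} {x : α}
    (h : @HasSum α ι _ σ f x (SummationFilter.unconditional ι)) :
    @tsum α ι _ τ f (SummationFilter.unconditional ι) = x :=
  let _ := τ
  HasSum.tsum_eq (h.mono_right (nhds_mono hστ))

theorem Convex.sum_smul_mem_of_zero_mem {E ι : Type*} [AddCommGroup E] [Module ℝ E] {C : Set E}
    (hC : Convex ℝ C) (h0 : (0 : E) ∈ C) {s : Finset ι} {w : ι → ℝ} {z : ι → E}
    (hw0 : ∀ i ∈ s, 0 ≤ w i) (hw1 : ∑ i ∈ s, w i ≤ 1) (hz : ∀ i ∈ s, z i ∈ C) :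
    ∑ i ∈ s, w i • z i ∈ C := by
  obtain hW | hW := (Finset.sum_nonneg hw0).eq_or_lt
  · rw [Finset.sum_eq_zero fun i hi => by
      rw [(Finset.sum_eq_zero_iff_of_nonneg hw0).1 hW.symm i hi, zero_smul]]
    exact h0
  · have := hC.smul_mem_of_zero_mem h0 (hC.centerMass_mem hw0 hW hz) ⟨hW.le, hw1⟩
    rwa [Finset.centerMass, smul_inv_smul₀ hW.ne'] at this

open scoped lp

theorem lp.summable_one (t : ℓ¹(ℕ, ℝ)) : Summable (t : ℕ → ℝ) :=
  .of_norm (by simpa using t.2.summable)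

theorem lp.norm_one_eq_tsum_abs (t : ℓ¹(ℕ, ℝ)) : ‖t‖ = ∑' i, |t i| := by
  rw [lp.norm_eq_tsum_rpow (by norm_num)]
  simp [Real.norm_eq_abs]

section WeakTopologyOf

variable {X ι : Type*} [NormedAddCommGroup X] [NormedSpace ℝ X]

abbrev weakTopologyOf (f : ι → StrongDual ℝ X) : TopologicalSpace X :=
  TopologicalSpace.induced (fun x i => f i x) Pi.topologicalSpace

variable (f : ι → StrongDual ℝ X)

theorem isTopologicalAddGroup_weakTopologyOf : @IsTopologicalAddGroup X (weakTopologyOf f) _ :=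
  topologicalAddGroup_induced (LinearMap.pi fun i => (f i).toLinearMap)

theorem continuousSMul_weakTopologyOf : @ContinuousSMul ℝ X _ _ (weakTopologyOf f) :=
  ContinuousSMul.induced (LinearMap.pi fun i => (f i).toLinearMap)

theorem locallyConvexSpace_weakTopologyOf : @LocallyConvexSpace ℝ X _ _ _ _ (weakTopologyOf f) :=
  LocallyConvexSpace.induced (LinearMap.pi fun i => (f i).toLinearMap)

theorem t2Space_weakTopologyOf (hf : ∀ x, (∀ i, f i x = 0) → x = 0) :
    @T2Space X (weakTopologyOf f) := by
  let _ := weakTopologyOf f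
  refine Topology.IsEmbedding.t2Space (f := fun x i => f i x) ⟨⟨rfl⟩, fun x y hxy => ?_⟩
  exact sub_eq_zero.1 (hf _ fun i => by rw [map_sub, sub_eq_zero]; exact congrFun hxy i)

theorem weakTopology_le_weakTopologyOf : weakTopology X ≤ weakTopologyOf f := by
  change _ ≤ TopologicalSpace.induced
    ((fun g i => g (f i)) ∘ fun x (φ : StrongDual ℝ X) => φ x) Pi.topologicalSpace
  rw [← induced_compose]
  exact induced_mono (continuous_iff_le_induced.1 (continuous_pi fun i => continuous_apply (f i)))

theorem le_weakTopologyOf : (inferInstance : TopologicalSpace X) ≤ weakTopologyOf f :=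
  continuous_iff_le_induced.1 <| continuous_pi fun i => (f i).continuous

end WeakTopologyOf

def shiftCoeff (t : ℕ → ℝ) : ℕ → ℝ
  | 0 => 1 - ∑' i, t i
  | n + 1 => t n

section Coefficients

variable {t s : ℕ → ℝ}

theorem Summable.shiftCoeff (ht : Summable t) : Summable (shiftCoeff t) :=
  (summable_nat_add_iff 1).mp ht

theorem tsum_shiftCoeff (ht : Summable t) : ∑' n, shiftCoeff t n = 1 := by
  rw [ht.shiftCoeff.tsum_eq_zero_add]
  exact sub_add_cancel 1 _

theorem ValidCoeff.summable (ht : ValidCoeff t) : Summable t := ht.2.2.1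

theorem ValidCoeff.shiftCoeff (ht : ValidCoeff t) : ValidCoeff (shiftCoeff t) := by
  obtain ⟨h0, h1, hsum, hle⟩ := ht
  have hnonneg : 0 ≤ ∑' i, t i := tsum_nonneg h0
  refine ⟨fun n => ?_, fun n => ?_, hsum.shiftCoeff, (tsum_shiftCoeff hsum).le⟩
  · cases n with
    | zero => exact sub_nonneg.2 hle
    | succ n => exact h0 n
  · cases n with
    | zero => exact sub_le_self 1 hnonneg
    | succ n => exact h1 n

theorem validCoeff_iff :
    ValidCoeff t ↔ (∀ i, 0 ≤ t i) ∧ ∀ n, ∑ i ∈ Finset.range n, t i ≤ 1 := by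
  refine ⟨fun ⟨h0, _, hsum, hle⟩ => ⟨h0, fun n => (hsum.sum_le_tsum _ fun i _ => h0 i).trans hle⟩,
    fun ⟨h0, hle⟩ => ⟨h0, fun i => ?_, summable_of_sum_range_le h0 hle,
      Real.tsum_le_of_sum_range_le h0 hle⟩⟩
  calc t i ≤ ∑ j ∈ Finset.range (i + 1), t j :=
        Finset.single_le_sum (fun j _ => h0 j) (Finset.self_mem_range_succ i)
    _ ≤ 1 := hle (i + 1)

theorem isCompact_setOf_validCoeff : IsCompact {t : ℕ → ℝ | ValidCoeff t} := by
  have hclosed : IsClosed {t : ℕ → ℝ | ValidCoeff t} := by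
    simp only [validCoeff_iff, Set.ofPred_and, Set.ofPred_forall]
    exact (isClosed_iInter fun i => isClosed_le continuous_const (continuous_apply i)).inter
      (isClosed_iInter fun n => isClosed_le
        (continuous_finsetSum _ fun i _ => continuous_apply i) continuous_const)
  exact (isCompact_univ_pi fun _ => isCompact_Icc (a := (0 : ℝ)) (b := 1)).of_isClosed_subset
    hclosed fun t ht i _ => ⟨ht.1 i, ht.2.1 i⟩

theorem ValidCoeff.convex_comb (ht : ValidCoeff t) (hs : ValidCoeff s) {p q : ℝ} (hp : 0 ≤ p)
    (hq : 0 ≤ q) (hpq : p + q = 1) : ValidCoeff (p • t + q • s) := by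
  rw [validCoeff_iff] at *
  refine ⟨fun i => ?_, fun n => ?_⟩
  · simp only [Pi.add_apply, Pi.smul_apply, smul_eq_mul]
    exact add_nonneg (mul_nonneg hp (ht.1 i)) (mul_nonneg hq (hs.1 i))
  · simp only [Pi.add_apply, Pi.smul_apply, smul_eq_mul, Finset.sum_add_distrib,
      ← Finset.mul_sum]
    nlinarith [ht.2 n, hs.2 n]

theorem shiftCoeff_convex_comb (ht : Summable t) (hs : Summable s) {p q : ℝ} (hpq : p + q = 1) :
    shiftCoeff (p • t + q • s) = p • shiftCoeff t + q • shiftCoeff s := by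
  funext n
  cases n with
  | zero =>
    simp only [shiftCoeff, Pi.add_apply, Pi.smul_apply, smul_eq_mul]
    rw [(ht.mul_left p).tsum_add (hs.mul_left q), tsum_mul_left, tsum_mul_left]
    linear_combination (-1 : ℝ) * hpq
  | succ n => rfl

theorem tsum_abs_shiftCoeff_sub (ht : Summable t) (hs : Summable s) :
    ∑' n, |shiftCoeff t n - shiftCoeff s n| = |∑' i, t i - ∑' i, s i| + ∑' i, |t i - s i| := by
  rw [(ht.shiftCoeff.sub hs.shiftCoeff).abs.tsum_eq_zero_add]
  congr 1
  rw [shiftCoeff, shiftCoeff, sub_sub_sub_cancel_left, abs_sub_comm]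

theorem abs_tsum_sub_le (ht : Summable t) (hs : Summable s) :
    |∑' i, t i - ∑' i, s i| ≤ ∑' i, |t i - s i| := by
  rw [← ht.tsum_sub hs]
  simpa only [Real.norm_eq_abs] using norm_tsum_le_tsum_norm (ht.sub hs).norm

theorem shiftCoeff_ne_self (ht : Summable t) : shiftCoeff t ≠ t := by
  intro hfix
  have hconst : ∀ n, t n = t 0 := fun n => by
    induction n with
    | zero => rfl
    | succ n ih => rw [← ih]; exact (congrFun hfix (n + 1)).symm
  have hzero : t 0 = 0 := by
    have := ht.tendsto_atTop_zero
    rw [funext hconst] at this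
    exact tendsto_nhds_unique tendsto_const_nhds this
  have htsum : ∑' i, t i = 0 := by
    rw [show t = 0 from funext fun n => (hconst n).trans hzero, Pi.zero_def, tsum_zero]
  have := congrFun hfix 0
  rw [shiftCoeff, htsum, hzero] at this
  norm_num at this

end Coefficients

section L1Sequence

variable {X : Type*} [NormedAddCommGroup X] [NormedSpace ℝ X] {u : ℕ → X} {a b : ℝ}
  {t s : ℕ → ℝ}

def L1LowerBound (u : ℕ → X) (a : ℝ) : Prop :=
  ∀ (n : ℕ) (t : ℕ → ℝ), a * ∑ i ∈ Finset.range n, |t i| ≤ ‖∑ i ∈ Finset.range n, t i • u i‖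

theorem norm_le_of_forall_norm_sum_range_le
    (h : ∀ (n : ℕ) (t : ℕ → ℝ),
      ‖∑ i ∈ Finset.range n, t i • u i‖ ≤ b * ∑ i ∈ Finset.range n, |t i|)
    (k : ℕ) : ‖u k‖ ≤ b := by
  simpa [Pi.single_apply, apply_ite] using h (k + 1) (Pi.single k 1)

theorem norm_smul_le_mul_abs (hub : ∀ i, ‖u i‖ ≤ b) (t : ℕ → ℝ) (i : ℕ) :
    ‖t i • u i‖ ≤ b * |t i| := by
  rw [norm_smul, Real.norm_eq_abs, mul_comm]
  exact mul_le_mul_of_nonneg_right (hub i) (abs_nonneg _)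

theorem summable_norm_smul_of_norm_le (hub : ∀ i, ‖u i‖ ≤ b) (ht : Summable t) :
    Summable fun i => ‖t i • u i‖ :=
  .of_nonneg_of_le (fun _ => norm_nonneg _) (norm_smul_le_mul_abs hub t) (ht.abs.mul_left b)

theorem norm_tsum_smul_le (hub : ∀ i, ‖u i‖ ≤ b) (ht : Summable t) :
    ‖∑' i, t i • u i‖ ≤ b * ∑' i, |t i| :=
  calc ‖∑' i, t i • u i‖ ≤ ∑' i, ‖t i • u i‖ :=
        norm_tsum_le_tsum_norm (summable_norm_smul_of_norm_le hub ht)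
    _ ≤ ∑' i, b * |t i| := (summable_norm_smul_of_norm_le hub ht).tsum_le_tsum
        (norm_smul_le_mul_abs hub t) (ht.abs.mul_left b)
    _ = b * ∑' i, |t i| := ht.abs.tsum_mul_left b

variable [CompleteSpace X]

theorem summable_smul_of_norm_le (hub : ∀ i, ‖u i‖ ≤ b) (ht : Summable t) :
    Summable fun i => t i • u i :=
  .of_norm (summable_norm_smul_of_norm_le hub ht)

theorem mul_tsum_abs_le_norm_tsum_smul (hlow : L1LowerBound u a) (hub : ∀ i, ‖u i‖ ≤ b)
    (ht : Summable t) : a * ∑' i, |t i| ≤ ‖∑' i, t i • u i‖ :=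
  le_of_tendsto_of_tendsto' (ht.abs.hasSum.tendsto_sum_nat.const_mul a)
    (summable_smul_of_norm_le hub ht).hasSum.tendsto_sum_nat.norm fun n => hlow n t

theorem tsum_smul_sub_tsum_smul (hub : ∀ i, ‖u i‖ ≤ b) (ht : Summable t) (hs : Summable s) :
    ∑' i, t i • u i - ∑' i, s i • u i = ∑' i, (t - s) i • u i := by
  simp only [Pi.sub_apply, sub_smul]
  exact ((summable_smul_of_norm_le hub ht).tsum_sub (summable_smul_of_norm_le hub hs)).symm

theorem tsum_smul_convex_comb (hub : ∀ i, ‖u i‖ ≤ b) (ht : Summable t) (hs : Summable s)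
    (p q : ℝ) :
    ∑' i, (p • t + q • s) i • u i = p • ∑' i, t i • u i + q • ∑' i, s i • u i := by
  simp only [Pi.add_apply, Pi.smul_apply, smul_eq_mul, add_smul, mul_smul]
  rw [((summable_smul_of_norm_le hub ht).const_smul p).tsum_add
    ((summable_smul_of_norm_le hub hs).const_smul q),
    (summable_smul_of_norm_le hub ht).tsum_const_smul,
    (summable_smul_of_norm_le hub hs).tsum_const_smul]

theorem ContinuousLinearMap.map_tsum_smul (φ : StrongDual ℝ X) (hub : ∀ i, ‖u i‖ ≤ b)
    (ht : Summable t) : φ (∑' i, t i • u i) = ∑' i, t i * φ (u i) := by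
  simp only [φ.map_tsum (summable_smul_of_norm_le hub ht), map_smul, smul_eq_mul]

theorem exists_l1_embedding (hlow : L1LowerBound u a) (hub : ∀ i, ‖u i‖ ≤ b) (ha : 0 < a) :
    ∃ Ψ : ℓ¹(ℕ, ℝ) →L[ℝ] X, AntilipschitzWith (Real.toNNReal a⁻¹) Ψ ∧
      (∀ t, Ψ t = ∑' i, t i • u i) ∧ ∀ n, Ψ (lp.single 1 n 1) = u n := by
  let Ψ : ℓ¹(ℕ, ℝ) →L[ℝ] X := LinearMap.mkContinuous
    { toFun t := ∑' i, t i • u i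
      map_add' t s := by
        simp only [lp.coeFn_add, Pi.add_apply, add_smul]
        exact (summable_smul_of_norm_le hub (lp.summable_one t)).tsum_add
          (summable_smul_of_norm_le hub (lp.summable_one s))
      map_smul' c t := by
        simp only [lp.coeFn_smul, Pi.smul_apply, smul_eq_mul, mul_smul, RingHom.id_apply]
        exact (summable_smul_of_norm_le hub (lp.summable_one t)).tsum_const_smul c }
    b fun t => by
      rw [lp.norm_one_eq_tsum_abs]
      exact norm_tsum_smul_le hub (lp.summable_one t)
  refine ⟨Ψ, Ψ.antilipschitz_of_bound fun t => ?_, fun t => rfl, fun n => ?_⟩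
  · rw [Real.coe_toNNReal _ (inv_nonneg.2 ha.le), lp.norm_one_eq_tsum_abs, ← div_eq_inv_mul,
      le_div_iff₀' ha]
    exact mul_tsum_abs_le_norm_tsum_smul hlow hub (lp.summable_one t)
  · show ∑' i, _ = _
    simp [Pi.single_apply]

theorem exists_coordinate_functional (hlow : L1LowerBound u a) (hub : ∀ i, ‖u i‖ ≤ b)
    (ha : 0 < a) (k : ℕ) :
    ∃ e : StrongDual ℝ X, ∀ n, e (u n) = if n = k then 1 else 0 := by
  obtain ⟨Ψ, hΨ, -, hsingle⟩ := exists_l1_embedding hlow hub ha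
  obtain ⟨e, he⟩ := Ψ.exists_comp_eq_of_antilipschitz hΨ (lp.evalCLM ℝ (fun _ : ℕ => ℝ) 1 k)
  refine ⟨e, fun n => ?_⟩
  rw [← hsingle n, ← ContinuousLinearMap.comp_apply, he]
  simp [lp.evalCLM, lp.single_apply, Pi.single_apply, eq_comm]

theorem apply_tsum_smul_of_apply_eq_ite {e : StrongDual ℝ X} {k : ℕ}
    (he : ∀ n, e (u n) = if n = k then 1 else 0) (hub : ∀ i, ‖u i‖ ≤ b) (ht : Summable t) :
    e (∑' i, t i • u i) = t k := by
  simp [e.map_tsum_smul hub ht, he]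

def eventualAnnihilator (u : ℕ → X) : Set (StrongDual ℝ X) :=
  {φ | ∀ᶠ n in atTop, φ (u n) = 0}

theorem eq_zero_of_forall_eventualAnnihilator (hlow : L1LowerBound u a)
    (hub : ∀ i, ‖u i‖ ≤ b) (ha : 0 < a) {x : X} (hx : ∀ φ ∈ eventualAnnihilator u, φ x = 0) :
    x = 0 := by
  obtain ⟨Ψ, hΨ, hΨapply, hsingle⟩ := exists_l1_embedding hlow hub ha
  obtain ⟨t, rfl⟩ : x ∈ LinearMap.range (Ψ : ℓ¹(ℕ, ℝ) →ₗ[ℝ] X) := by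
    by_contra hxΨ
    obtain ⟨φ, hφx, hφ⟩ := Submodule.exists_strongDual_ne_zero_of_notMem
      (by rw [LinearMap.coe_range, ContinuousLinearMap.coe_coe]
          exact hΨ.isClosed_range Ψ.uniformContinuous) hxΨ
    exact hφx (hx φ (Eventually.of_forall fun n => hφ _ ⟨_, hsingle n⟩))
  suffices t = 0 by rw [this, map_zero]
  ext k
  obtain ⟨e, he⟩ := exists_coordinate_functional hlow hub ha k
  have : e (Ψ t) = 0 :=
    hx e (eventually_atTop.2 ⟨k + 1, fun n hn => by rw [he, if_neg (by omega)]⟩)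
  rwa [hΨapply, apply_tsum_smul_of_apply_eq_ite he hub (lp.summable_one t)] at this

end L1Sequence

section KplusSigma

variable {X : Type*} [NormedAddCommGroup X] [NormedSpace ℝ X] {u : ℕ → X} {a b : ℝ}

theorem KplusSigma_subset {C : Set X} (hcl : IsClosed C) (hconv : Convex ℝ C) (h0 : (0 : X) ∈ C)
    (hu : ∀ n, u n ∈ C) : KplusSigma u ⊆ C := by
  rintro v ⟨t, ht0, -, hsum, hle, hv⟩
  refine hcl.mem_of_tendsto hv.tendsto_sum_nat (Eventually.of_forall fun n => ?_)
  exact hconv.sum_smul_mem_of_zero_mem h0 (fun i _ => ht0 i)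
    ((hsum.sum_le_tsum _ fun i _ => ht0 i).trans hle) fun i _ => hu i

variable [CompleteSpace X]

theorem KplusSigma_eq_image (hub : ∀ i, ‖u i‖ ≤ b) :
    KplusSigma u = (fun t => ∑' i, t i • u i) '' {t | ValidCoeff t} := by
  ext v
  constructor
  · rintro ⟨t, h0, h1, hs, hle, hv⟩
    exact ⟨t, ⟨h0, h1, hs, hle⟩, hv.tsum_eq⟩
  · rintro ⟨t, ⟨h0, h1, hs, hle⟩, rfl⟩
    exact ⟨t, h0, h1, hs, hle, (summable_smul_of_norm_le hub hs).hasSum⟩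

theorem convex_KplusSigma (hub : ∀ i, ‖u i‖ ≤ b) : Convex ℝ (KplusSigma u) := by
  rw [KplusSigma_eq_image hub]
  rintro _ ⟨t, ht, rfl⟩ _ ⟨s, hs, rfl⟩ p q hp hq hpq
  exact ⟨p • t + q • s, ht.convex_comb hs hp hq hpq,
    tsum_smul_convex_comb hub ht.summable hs.summable p q⟩

theorem isCompact_KplusSigma (hub : ∀ i, ‖u i‖ ≤ b) :
    @IsCompact X (weakTopologyOf (Subtype.val : eventualAnnihilator u → StrongDual ℝ X))
      (KplusSigma u) := by
  let f : eventualAnnihilator u → StrongDual ℝ X := Subtype.val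
  have hind : @Topology.IsInducing X _ (weakTopologyOf f) _ fun x φ => f φ x :=
    @Topology.IsInducing.mk X _ (weakTopologyOf f) _ _ rfl
  rw [@Topology.IsInducing.isCompact_iff X _ (weakTopologyOf f) _ _ _ hind,
    KplusSigma_eq_image hub, Set.image_image]
  refine isCompact_setOf_validCoeff.image_of_continuousOn (continuousOn_pi.2 fun φ => ?_)
  obtain ⟨N, hN⟩ := eventually_atTop.1 φ.2
  have hφ : ∀ t : ℕ → ℝ, Summable t →
      f φ (∑' i, t i • u i) = ∑ i ∈ Finset.range N, t i * f φ (u i) := fun t ht => by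
    rw [(f φ).map_tsum_smul hub ht]
    exact tsum_eq_sum fun i hi => by rw [hN i (by simpa using hi), mul_zero]
  exact (continuous_finsetSum _ fun i _ => (continuous_apply i).mul continuous_const)
    |>.continuousOn.congr fun t ht => hφ t ht.summable

def shiftMap (e : ℕ → StrongDual ℝ X) (u : ℕ → X) (v : X) : X :=
  ∑' i, shiftCoeff (fun k => e k v) i • u i

variable {e : ℕ → StrongDual ℝ X} {t : ℕ → ℝ}

theorem shiftMap_tsum (he : ∀ k n, e k (u n) = if n = k then 1 else 0) (hub : ∀ i, ‖u i‖ ≤ b)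
    (ht : Summable t) : shiftMap e u (∑' i, t i • u i) = ∑' i, shiftCoeff t i • u i := by
  simp only [shiftMap, apply_tsum_smul_of_apply_eq_ite (he _) hub ht]

theorem tsum_shiftCoeff_smul (hub : ∀ i, ‖u i‖ ≤ b) (ht : Summable t) :
    ∑' i, shiftCoeff t i • u i = (1 - ∑' i, t i) • u 0 + ∑' i, t i • u (i + 1) :=
  (summable_smul_of_norm_le hub ht.shiftCoeff).tsum_eq_zero_add

theorem mapsTo_shiftMap (he : ∀ k n, e k (u n) = if n = k then 1 else 0)
    (hub : ∀ i, ‖u i‖ ≤ b) : Set.MapsTo (shiftMap e u) (KplusSigma u) (KplusSigma u) := by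
  rw [KplusSigma_eq_image hub]
  rintro _ ⟨t, ht, rfl⟩
  exact ⟨shiftCoeff t, ht.shiftCoeff, (shiftMap_tsum he hub ht.summable).symm⟩

theorem affineOn_shiftMap (he : ∀ k n, e k (u n) = if n = k then 1 else 0)
    (hub : ∀ i, ‖u i‖ ≤ b) : AffineOn (shiftMap e u) (KplusSigma u) := by
  rw [KplusSigma_eq_image hub]
  rintro _ ⟨t, ht, rfl⟩ _ ⟨s, hs, rfl⟩ p - -
  have hcomb : Summable (p • t + (1 - p) • s) :=
    (ht.summable.const_smul p).add (hs.summable.const_smul (1 - p))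
  dsimp only
  rw [← tsum_smul_convex_comb hub ht.summable hs.summable, shiftMap_tsum he hub hcomb,
    shiftMap_tsum he hub ht.summable, shiftMap_tsum he hub hs.summable,
    shiftCoeff_convex_comb ht.summable hs.summable (add_sub_cancel p 1),
    tsum_smul_convex_comb hub ht.summable.shiftCoeff hs.summable.shiftCoeff]

theorem biLipschitzOn_shiftMap (he : ∀ k n, e k (u n) = if n = k then 1 else 0)
    (hlow : L1LowerBound u a) (hub : ∀ i, ‖u i‖ ≤ b) (ha : 0 < a) (hab : a ≤ b) :
    BiLipschitzOn (shiftMap e u) (KplusSigma u) := by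
  have hb : 0 < b := ha.trans_le hab
  rw [KplusSigma_eq_image hub]
  refine ⟨a / b, 2 * b / a, div_pos ha hb, ?_, ?_⟩
  · rw [div_le_div_iff₀ hb ha]
    nlinarith
  rintro _ ⟨t, ht, rfl⟩ _ ⟨s, hs, rfl⟩
  have hts := ht.summable.sub hs.summable
  have hts' := ht.summable.shiftCoeff.sub hs.summable.shiftCoeff
  rw [shiftMap_tsum he hub ht.summable, shiftMap_tsum he hub hs.summable,
    tsum_smul_sub_tsum_smul hub ht.summable hs.summable,
    tsum_smul_sub_tsum_smul hub ht.summable.shiftCoeff hs.summable.shiftCoeff]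
  have hsplit := tsum_abs_shiftCoeff_sub ht.summable hs.summable
  have hdiff := abs_tsum_sub_le ht.summable hs.summable
  have hlow₁ := mul_tsum_abs_le_norm_tsum_smul hlow hub hts
  have hupp₁ := norm_tsum_smul_le hub hts
  have hlow₂ := mul_tsum_abs_le_norm_tsum_smul hlow hub hts'
  have hupp₂ := norm_tsum_smul_le hub hts'
  simp only [Pi.sub_apply] at hlow₁ hupp₁ hlow₂ hupp₂ ⊢
  set D := ∑' i, |t i - s i|
  set D' := ∑' n, |shiftCoeff t n - shiftCoeff s n|
  constructor
  · calc a / b * ‖∑' i, (t i - s i) • u i‖ ≤ a / b * (b * D) := by gcongr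
      _ = a * D := by field_simp
      _ ≤ a * D' := by gcongr; linarith [abs_nonneg (∑' i, t i - ∑' i, s i)]
      _ ≤ _ := hlow₂
  · calc _ ≤ b * D' := hupp₂
      _ ≤ b * (2 * D) := by gcongr; linarith
      _ = 2 * b / a * (a * D) := by field_simp
      _ ≤ 2 * b / a * ‖∑' i, (t i - s i) • u i‖ := by gcongr

theorem shiftMap_ne_self (he : ∀ k n, e k (u n) = if n = k then 1 else 0)
    (hub : ∀ i, ‖u i‖ ≤ b) : ∀ v ∈ KplusSigma u, shiftMap e u v ≠ v := by
  rw [KplusSigma_eq_image hub]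
  rintro _ ⟨t, ht, rfl⟩ hfix
  rw [shiftMap_tsum he hub ht.summable] at hfix
  refine shiftCoeff_ne_self ht.summable (funext fun k => ?_)
  have := congrArg (e k) hfix
  rwa [apply_tsum_smul_of_apply_eq_ite (he k) hub ht.summable.shiftCoeff,
    apply_tsum_smul_of_apply_eq_ite (he k) hub ht.summable] at this

end KplusSigma

theorem stmt16_general {X : Type*} [NormedAddCommGroup X] [NormedSpace ℝ X] [CompleteSpace X]
    (C : Set X)
    (hcl : IsClosed C) (hconv : Convex ℝ C) (h0 : (0:X) ∈ C)
    (u : ℕ → X) (hu : ∀ n, u n ∈ C)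
    (a b : ℝ) (ha : 0 < a) (hab : a ≤ b)
    (hl1 : ∀ (n : ℕ) (t : ℕ → ℝ),
      a * ∑ i ∈ Finset.range n, |t i| ≤ ‖∑ i ∈ Finset.range n, t i • u i‖ ∧
      ‖∑ i ∈ Finset.range n, t i • u i‖ ≤ b * ∑ i ∈ Finset.range n, |t i|) :
    ∃ τ : TopologicalSpace X,
      @T2Space X τ ∧ @IsTopologicalAddGroup X τ _ ∧ @ContinuousSMul ℝ X _ _ τ ∧
      @LocallyConvexSpace ℝ X _ _ _ _ τ ∧
      (∀ U : Set X, τ.IsOpen U → (weakTopology X).IsOpen U) ∧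
      @IsCompact X τ (KplusSigma u) ∧ Convex ℝ (KplusSigma u) ∧ KplusSigma u ⊆ C ∧
      ∃ T : X → X,
        (∀ t : ℕ → ℝ, ValidCoeff t →
          T (∑' i, t i • u i) = (1 - ∑' i, t i) • u 0 + ∑' i, t i • u (i + 1)) ∧
        Set.MapsTo T (KplusSigma u) (KplusSigma u) ∧
        AffineOn T (KplusSigma u) ∧ BiLipschitzOn T (KplusSigma u) ∧
        ∀ v ∈ KplusSigma u, T v ≠ v := by
  have hlow : L1LowerBound u a := fun n t => (hl1 n t).1
  have hub : ∀ i, ‖u i‖ ≤ b := norm_le_of_forall_norm_sum_range_le fun n t => (hl1 n t).2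
  choose e he using exists_coordinate_functional hlow hub ha
  let f : eventualAnnihilator u → StrongDual ℝ X := Subtype.val
  have hT2 : @T2Space X (weakTopologyOf f) := t2Space_weakTopologyOf f fun x hx =>
    eq_zero_of_forall_eventualAnnihilator hlow hub ha fun φ hφ => hx ⟨φ, hφ⟩
  refine ⟨weakTopologyOf f, hT2, isTopologicalAddGroup_weakTopologyOf f,
    continuousSMul_weakTopologyOf f, locallyConvexSpace_weakTopologyOf f,
    weakTopology_le_weakTopologyOf f, isCompact_KplusSigma hub, convex_KplusSigma hub,
    KplusSigma_subset hcl hconv h0 hu, shiftMap e u, fun t ht => ?_, mapsTo_shiftMap he hub,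
    affineOn_shiftMap he hub, biLipschitzOn_shiftMap he hlow hub ha hab, shiftMap_ne_self he hub⟩
  -- the sums on the left are taken in `τ`, where they agree with the norm sums
  rw [(summable_smul_of_norm_le hub ht.summable).hasSum.tsum_eq_of_le_topology
      (le_weakTopologyOf f),
    (summable_smul_of_norm_le (fun i => hub (i + 1)) ht.summable).hasSum.tsum_eq_of_le_topology
      (le_weakTopologyOf f),
    shiftMap_tsum he hub ht.summable, tsum_shiftCoeff_smul hub ht.summable]

/-- if a bounded closed convex set `C ∋ 0` contains an `ℓ₁`-sequence `(u_n)`,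
then `K_σ^+({u_n})` is compact for some Hausdorff locally convex topology weaker than the
weak topology and carries a fixed-point-free affine bi-Lipschitz self-map (the shift). -/
theorem stmt16 {X : Type*} [NormedAddCommGroup X] [NormedSpace ℝ X] [CompleteSpace X]
    (C : Set X) (hne : C.Nonempty) (hbdd : Bornology.IsBounded C)
    (hcl : IsClosed C) (hconv : Convex ℝ C) (h0 : (0:X) ∈ C)
    (u : ℕ → X) (hu : ∀ n, u n ∈ C)
    (a b : ℝ) (ha : 0 < a) (hab : a ≤ b)
    (hl1 : ∀ (n : ℕ) (t : ℕ → ℝ),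
      a * ∑ i ∈ Finset.range n, |t i| ≤ ‖∑ i ∈ Finset.range n, t i • u i‖ ∧
      ‖∑ i ∈ Finset.range n, t i • u i‖ ≤ b * ∑ i ∈ Finset.range n, |t i|) :
    ∃ τ : TopologicalSpace X,
      @T2Space X τ ∧ @IsTopologicalAddGroup X τ _ ∧ @ContinuousSMul ℝ X _ _ τ ∧
      @LocallyConvexSpace ℝ X _ _ _ _ τ ∧
      (∀ U : Set X, τ.IsOpen U → (weakTopology X).IsOpen U) ∧
      @IsCompact X τ (KplusSigma u) ∧ Convex ℝ (KplusSigma u) ∧ KplusSigma u ⊆ C ∧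
      ∃ T : X → X,
        (∀ t : ℕ → ℝ, ValidCoeff t →
          T (∑' i, t i • u i) = (1 - ∑' i, t i) • u 0 + ∑' i, t i • u (i + 1)) ∧
        Set.MapsTo T (KplusSigma u) (KplusSigma u) ∧
        AffineOn T (KplusSigma u) ∧ BiLipschitzOn T (KplusSigma u) ∧
        ∀ v ∈ KplusSigma u, T v ≠ v :=
  stmt16_general C hcl hconv h0 u hu a b ha hab hl1
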